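/- arXiv:1504.00136 — 4 statements merged into one kernel-verified Lean document; each statement's English description precedes it below -/
import Mathlib

section
/- Let n, m, t, l be natural numbers and let A be an n×m Boolean matrix, B an n×l Boolean matrix, E a t×m Boolean matrix, and F a t×l Boolean matrix. Let M⁺ = fromBlocks A B E F be the (n+t)×(m+l) block matrix [A B; E F], and set Π = A⊙Aᵀ (the type-2 characteristic matrix of the original covering), Δ₁ = B⊙Bᵀ, Δ₂ = (fromCols E F)⊙(fromCols A B)ᵀ, Δ₃ = (fromCols A B)⊙(fromCols E F)ᵀ, and Δ₄ = (fromCols E F)⊙(fromCols E F)ᵀ. Then M⁺⊙(M⁺)ᵀ = (fromBlocks Π 1 1 1) ⊓ (fromBlocks Δ₁ Δ₃ Δ₂ Δ₄), where 1 denotes the all-true block of the appropriate size. -/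
open Matrix

/-- ⊙-product of Boolean matrices: `(P⊙Q)(i,j) = ⋀ k, (P i k → Q k j)`. -/
noncomputable def bodot {α β γ : Type*} [Fintype β] (P : Matrix α β Bool) (Q : Matrix β γ Bool) :
    Matrix α γ Bool :=
  fun i j => Finset.univ.inf fun k => !(P i k) || Q k j

/-- Entrywise meet of Boolean matrices. -/
def minf {α β : Type*} (X Y : Matrix α β Bool) : Matrix α β Bool :=
  fun i j => X i j && Y i j

/-- All-true Boolean matrix. -/
def mone (α β : Type*) : Matrix α β Bool := fun _ _ => true

/-! Splitting the covering index set `m ⊕ l` turns the meet over it into a meet of two ⊙-products;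
splitting the object index set `n ⊕ t` only cuts `M⁺⊙(M⁺)ᵀ` into blocks. Meeting with the all-true
blocks is the identity, so only the upper-left block retains `Π = A⊙Aᵀ`. -/

section Bodot

variable {α α₁ α₂ β β₁ β₂ γ γ₁ γ₂ : Type*}

theorem fromRows_bodot [Fintype β] (X : Matrix α₁ β Bool) (Y : Matrix α₂ β Bool)
    (Z : Matrix β γ Bool) :
    bodot (fromRows X Y) Z = fromRows (bodot X Z) (bodot Y Z) := by
  ext (i | i) j <;> rfl

theorem bodot_fromCols [Fintype β] (X : Matrix α β Bool) (Y : Matrix β γ₁ Bool)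
    (Z : Matrix β γ₂ Bool) :
    bodot X (fromCols Y Z) = fromCols (bodot X Y) (bodot X Z) := by
  ext i (j | j) <;> rfl

theorem fromRows_bodot_fromCols [Fintype β] (X : Matrix α₁ β Bool) (Y : Matrix α₂ β Bool)
    (U : Matrix β γ₁ Bool) (V : Matrix β γ₂ Bool) :
    bodot (fromRows X Y) (fromCols U V) =
      fromBlocks (bodot X U) (bodot X V) (bodot Y U) (bodot Y V) := by
  rw [fromRows_bodot, bodot_fromCols, bodot_fromCols, fromRows_fromCols_eq_fromBlocks]

theorem fromCols_bodot_fromRows [Fintype β₁] [Fintype β₂] (P : Matrix α β₁ Bool)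
    (Q : Matrix α β₂ Bool) (R : Matrix β₁ γ Bool) (S : Matrix β₂ γ Bool) :
    bodot (fromCols P Q) (fromRows R S) = minf (bodot P R) (bodot Q S) := by
  ext i j
  simp only [bodot, minf, ← Finset.univ_disjSum_univ, Finset.inf_disjSum, fromCols_apply_inl,
    fromCols_apply_inr, fromRows_apply_inl, fromRows_apply_inr]
  rfl

theorem fromBlocks_minf_fromBlocks (A A' : Matrix α₁ β₁ Bool) (B B' : Matrix α₁ β₂ Bool)
    (C C' : Matrix α₂ β₁ Bool) (D D' : Matrix α₂ β₂ Bool) :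
    minf (fromBlocks A B C D) (fromBlocks A' B' C' D') =
      fromBlocks (minf A A') (minf B B') (minf C C') (minf D D') := by
  ext (i | i) (j | j) <;> rfl

theorem mone_minf (X : Matrix α β Bool) : minf (mone α β) X = X :=
  rfl

end Bodot

theorem type2_incremental_update {n m t l : ℕ}
    (A : Matrix (Fin n) (Fin m) Bool) (B : Matrix (Fin n) (Fin l) Bool)
    (E : Matrix (Fin t) (Fin m) Bool) (F : Matrix (Fin t) (Fin l) Bool) :
    bodot (Matrix.fromBlocks A B E F) (Matrix.fromBlocks A B E F)ᵀ =
      minf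
        (Matrix.fromBlocks (bodot A Aᵀ) (mone (Fin n) (Fin t))
          (mone (Fin t) (Fin n)) (mone (Fin t) (Fin t)))
        (Matrix.fromBlocks (bodot B Bᵀ)
          (bodot (Matrix.fromCols A B) (Matrix.fromCols E F)ᵀ)
          (bodot (Matrix.fromCols E F) (Matrix.fromCols A B)ᵀ)
          (bodot (Matrix.fromCols E F) (Matrix.fromCols E F)ᵀ)) := by
  rw [fromBlocks_minf_fromBlocks, mone_minf, mone_minf, mone_minf,
    ← fromRows_fromCols_eq_fromBlocks, transpose_fromRows, fromRows_bodot_fromCols,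
    transpose_fromCols A B, fromCols_bodot_fromRows]
end

section
/- Let U = Fin n be a finite universe and C : Fin m → Set U a family of subsets of U. Let Γ be the n×n Boolean matrix with Γ(i,j) = true iff there exists k with i ∈ C k and j ∈ C k, and for X ⊆ U let χ_X be the Boolean vector with χ_X(j) = true iff j ∈ X. Then for every X ⊆ U and every i, (Γ·χ_X)(i) = true if and only if i belongs to the second upper approximation SH(X) = ⋃ {C k | the intersection C k ∩ X is nonempty}. -/
/-- Boolean matrix–vector product: `(M·v)(i) = ⋁ j, M i j ∧ v j`. -/
noncomputable def bmulVec {n : ℕ} (M : Matrix (Fin n) (Fin n) Bool) (v : Fin n → Bool) :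
    Fin n → Bool :=
  fun i => Finset.univ.sup fun j => M i j && v j

theorem type1_matrix_computes_second_upper {n m : ℕ} (C : Fin m → Set (Fin n))
    (Γ : Matrix (Fin n) (Fin n) Bool)
    (hΓ : ∀ i j, Γ i j = true ↔ ∃ k, i ∈ C k ∧ j ∈ C k)
    (X : Set (Fin n)) (χ : Fin n → Bool)
    (hχ : ∀ j, χ j = true ↔ j ∈ X) :
    ∀ i, bmulVec Γ χ i = true ↔ i ∈ ⋃ k ∈ {k | (C k ∩ X).Nonempty}, C k := by
  intro i
  have key : bmulVec Γ χ i = true ↔ ∃ j, (Γ i j && χ j) = true := by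
    unfold bmulVec
    constructor
    · intro h
      by_contra hc
      push_neg at hc
      have : (Finset.univ.sup fun j => Γ i j && χ j) = false :=
        Finset.sup_eq_bot_iff (fun j => Γ i j && χ j) Finset.univ |>.mpr
          (fun j _ => Bool.eq_false_iff.mpr (hc j))
      rw [this] at h; exact Bool.false_ne_true h
    · rintro ⟨j, hj⟩
      have := Finset.le_sup (f := fun j => Γ i j && χ j) (Finset.mem_univ j)
      rw [hj] at this
      exact le_antisymm (Bool.le_true _) this
  rw [key]
  simp only [Set.mem_iUnion, Set.mem_setOf_eq]
  constructor
  · rintro ⟨j, hj⟩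
    rw [Bool.and_eq_true] at hj
    obtain ⟨k, hik, hjk⟩ := (hΓ i j).mp hj.1
    exact ⟨k, ⟨j, hjk, (hχ j).mp hj.2⟩, hik⟩
  · rintro ⟨k, ⟨j, hjk, hjX⟩, hik⟩
    exact ⟨j, Bool.and_eq_true _ _ |>.mpr ⟨(hΓ i j).mpr ⟨k, hik, hjk⟩, (hχ j).mpr hjX⟩⟩
end

section
/- Let U = Fin n be a finite universe and C : Fin m → Set U a family of subsets of U. Let Γ be the n×n Boolean matrix with Γ(i,j) = true iff there exists k with i ∈ C k and j ∈ C k, and for X ⊆ U let χ_X be the Boolean vector with χ_X(j) = true iff j ∈ X. Then for every X ⊆ U and every i, (Γ⊙χ_X)(i) = true if and only if i belongs to the second lower approximation SL(X) = (SH(Xᶜ))ᶜ, the complement of ⋃ {C k | the intersection C k ∩ Xᶜ is nonempty}. -/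
/-- Boolean matrix–vector ⊙-product: `(M⊙v)(i) = ⋀ j, (M i j → v j)`. -/
noncomputable def bodotVec {n : ℕ} (M : Matrix (Fin n) (Fin n) Bool) (v : Fin n → Bool) :
    Fin n → Bool :=
  fun i => Finset.univ.inf fun j => !(M i j) || v j

theorem type1_matrix_computes_second_lower {n m : ℕ} (C : Fin m → Set (Fin n))
    (Γ : Matrix (Fin n) (Fin n) Bool)
    (hΓ : ∀ i j, Γ i j = true ↔ ∃ k, i ∈ C k ∧ j ∈ C k)
    (X : Set (Fin n)) (χ : Fin n → Bool)
    (hχ : ∀ j, χ j = true ↔ j ∈ X) :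
    ∀ i, bodotVec Γ χ i = true ↔ i ∈ (⋃ k ∈ {k | (C k ∩ Xᶜ).Nonempty}, C k)ᶜ := by
  intro i
  simp only [bodotVec]
  rw [show (true : Bool) = ⊤ from rfl, Finset.inf_eq_top_iff]
  simp only [Finset.mem_univ, forall_true_left,
    Set.mem_compl_iff, Set.mem_iUnion, not_exists, Set.mem_setOf_eq]
  constructor
  · intro h k hne hik
    obtain ⟨j, hjC, hjX⟩ := hne
    have := h j
    rw [show (⊤ : Bool) = true from rfl, Bool.or_eq_true, Bool.not_eq_true'] at this
    rcases this with hΓf | hχt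
    · exact absurd ((hΓ i j).mpr ⟨k, hik, hjC⟩) (by simp [hΓf])
    · exact hjX ((hχ j).mp hχt)
  · intro h j
    rw [show (⊤ : Bool) = true from rfl, Bool.or_eq_true, Bool.not_eq_true']
    by_cases hg : Γ i j = true
    · obtain ⟨k, hik, hjk⟩ := (hΓ i j).mp hg
      right
      rw [hχ j]
      by_contra hjX
      exact h k ⟨j, hjk, hjX⟩ hik
    · left; simpa using hg
end

section
/- Let U = Fin n be a finite universe and C : Fin m → Set U a covering of U (each C k nonempty and ⋃_k C k = U). Let Π be the n×n Boolean matrix with Π(i,j) = true iff for every k, i ∈ C k implies j ∈ C k, and for X ⊆ U let χ_X be the Boolean vector with χ_X(j) = true iff j ∈ X. Then for every X ⊆ U and every i, (Π⊙χ_X)(i) = true if and only if i belongs to the sixth lower approximation XL(X) = {x ∈ U | N(x) ⊆ X}, where N(x) = ⋂ {C k | x ∈ C k}. -/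
theorem type2_matrix_computes_sixth_lower {n m : ℕ} (C : Fin m → Set (Fin n))
    (hne : ∀ k, (C k).Nonempty) (hcov : ⋃ k, C k = Set.univ)
    (P : Matrix (Fin n) (Fin n) Bool)
    (hP : ∀ i j, P i j = true ↔ ∀ k, i ∈ C k → j ∈ C k)
    (X : Set (Fin n)) (χ : Fin n → Bool)
    (hχ : ∀ j, χ j = true ↔ j ∈ X) :
    ∀ i, bodotVec P χ i = true ↔
      i ∈ {x : Fin n | (⋂ k ∈ {k | x ∈ C k}, C k) ⊆ X} := by
  intro i
  have h : bodotVec P χ i = true ↔ ∀ j, (!(P i j) || χ j) = true := by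
    rw [bodotVec, show (true : Bool) = ⊤ from rfl, Finset.inf_eq_top_iff]
    simp
  rw [h]
  simp only [Bool.or_eq_true, Bool.not_eq_true', Set.mem_setOf_eq]
  constructor
  · intro hall x hx
    rcases hall x with hfalse | htrue
    · exfalso
      apply absurd _ (hP i x |>.not.mp (by simp [hfalse]))
      intro k hik
      exact Set.mem_iInter₂.mp hx k hik
    · exact (hχ x).mp htrue
  · intro hsub j
    by_cases hj : P i j = true
    · right
      exact (hχ j).mpr (hsub (Set.mem_iInter₂.mpr fun k hik => (hP i j).mp hj k hik))
    · left; simpa using hj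
end
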